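/- arXiv:2605.30605 — 6 statements merged into one kernel-verified Lean document; each statement's English description precedes it below -/
import Mathlib

section
/- Let n = 2^k·m with m odd. Then the n-th letter (indexed from 1) of the fixed point of the period doubling substitution x→xy, y→xx is x if k is even and y if k is odd. -/
theorem apply_two_pow_mul_eq_xor_odd {p : ℕ → Bool}
    (heven : ∀ i : ℕ, 1 ≤ i → p (2 * i) = !(p i)) {n : ℕ} (hn : 1 ≤ n) (k : ℕ) :
    p (2 ^ k * n) = (p n ^^ decide (Odd k)) := by
  induction k with
  | zero => simp
  | succ k ih =>
    have hpos : 1 ≤ 2 ^ k * n := Nat.mul_pos (Nat.two_pow_pos k) hn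
    rw [pow_succ, mul_comm _ 2, mul_assoc, heven _ hpos, ih]
    simp only [Nat.odd_add_one, decide_not, Bool.xor_not]

/-- The letters `x` and `y` are encoded as `true` and `false`. -/
theorem period_doubling_letter
    (p : ℕ → Bool)
    (hodd : ∀ i : ℕ, p (2 * i + 1) = true)
    (heven : ∀ i : ℕ, 1 ≤ i → p (2 * i) = !(p i)) :
    ∀ k m : ℕ, Odd m → (p (2 ^ k * m) = true ↔ Even k) := by
  rintro k m ⟨i, rfl⟩
  rw [apply_two_pow_mul_eq_xor_odd heven (by omega) k, hodd i]
  simp [Nat.not_odd_iff_even]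
end

section
/- For every n ≥ 1, the n-th letter of the period doubling sequence equals x if and only if the n-th symbol of the Thue-Morse sequence differs from the (n+1)-th symbol; that is, the period doubling sequence is the image of the Thue-Morse sequence under the 2-block map sending unequal adjacent pairs to x and equal adjacent pairs to y. -/
/-- The period doubling sequence `p` (fixed point of `x → xy`, `y → xx`,
indexed from 1, with `x` encoded as `true` and `y` as `false`) is the image of
the Thue–Morse sequence `t` (indexed from 0) under the 2-block map sending
unequal adjacent pairs to `x` and equal pairs to `y`:
`p n = x ↔ t (n-1) ≠ t n` for all `n ≥ 1`. -/
theorem period_doubling_from_thue_morse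
    (t : ℕ → ℕ) (h0 : t 0 = 0)
    (hte : ∀ i, t (2 * i) = t i)
    (hto : ∀ i, t (2 * i + 1) = 1 - t i)
    (p : ℕ → Bool)
    (hpo : ∀ i : ℕ, p (2 * i + 1) = true)
    (hpe : ∀ i : ℕ, 1 ≤ i → p (2 * i) = !(p i)) :
    ∀ n : ℕ, 1 ≤ n → (p n = true ↔ t (n - 1) ≠ t n) := by
  have hb : ∀ i, t i ≤ 1 := by
    intro i
    induction i using Nat.strong_induction_on with
    | _ i ih =>
      obtain ⟨k, hk | hk⟩ := Nat.even_or_odd' i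
      · rcases Nat.eq_zero_or_pos k with h | h
        · subst hk; simp [h, h0]
        · have := ih k (by omega)
          rw [hk, hte]; exact this
      · rw [hk, hto]; omega
  intro n
  induction n using Nat.strong_induction_on with
  | _ n ih =>
    intro hn
    obtain ⟨k, hk | hk⟩ := Nat.even_or_odd' n
    · have hk1 : 1 ≤ k := by omega
      have hp := hpe k hk1
      have h1 : t (n - 1) = 1 - t (k - 1) := by
        have he : n - 1 = 2 * (k - 1) + 1 := by omega
        rw [he, hto]
      have h2 : t n = t k := by rw [hk, hte]
      have hih := ih k (by omega) hk1
      have hb1 := hb (k - 1)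
      have hb2 := hb k
      have hflip : p n = true ↔ p k = false := by
        rw [hk, hp]; cases p k <;> simp
      rw [hflip, Bool.eq_false_iff, h1, h2]
      simp only [ne_eq, hih, not_not]
      omega
    · have h1 : t (n - 1) = t k := by
        have he : n - 1 = 2 * k := by omega
        rw [he, hte]
      have h2 : t n = 1 - t k := by rw [hk, hto]
      have hb1 := hb k
      subst hk
      rw [hpo, h1, h2]
      simp only [true_iff]
      omega
end

section
/- The word xxxx does not occur as a factor of the period doubling sequence. -/
/-- The word `xxxx` does not occur as a factor of the period doubling sequence
(fixed point of `x → xy`, `y → xx`, indexed from 1, with `x` encoded as `true`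
and `y` as `false`). -/
theorem period_doubling_no_xxxx
    (p : ℕ → Bool)
    (hodd : ∀ i : ℕ, p (2 * i + 1) = true)
    (heven : ∀ i : ℕ, 1 ≤ i → p (2 * i) = !(p i)) :
    ¬ ∃ i : ℕ, 1 ≤ i ∧ p i = true ∧ p (i + 1) = true ∧ p (i + 2) = true ∧
      p (i + 3) = true := by
  rintro ⟨i, hi, h0, h1, h2, h3⟩
  -- find two consecutive j with p j = false
  obtain ⟨j, hj, hja, hjb⟩ : ∃ j : ℕ, 1 ≤ j ∧ p j = false ∧ p (j + 1) = false := by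
    rcases Nat.even_or_odd i with ⟨j, hji⟩ | ⟨j, hji⟩
    · refine ⟨j, ?_, ?_, ?_⟩
      · omega
      · have := heven j (by omega)
        have : p (2 * j) = !(p j) := this
        rw [show i = 2 * j by omega] at h0
        rw [h0] at this
        simpa using this.symm
      · have := heven (j + 1) (by omega)
        rw [show i + 2 = 2 * (j + 1) by omega] at h2
        rw [h2] at this
        simpa using this.symm
    · refine ⟨j + 1, by omega, ?_, ?_⟩
      · have := heven (j + 1) (by omega)
        rw [show i + 1 = 2 * (j + 1) by omega] at h1
        rw [h1] at this
        simpa using this.symm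
      · have := heven (j + 2) (by omega)
        rw [show i + 3 = 2 * (j + 2) by omega] at h3
        rw [h3] at this
        simpa using this.symm
  rcases Nat.even_or_odd j with ⟨m, hm⟩ | ⟨m, hm⟩
  · have := hodd m
    rw [show 2 * m + 1 = j + 1 by omega] at this
    rw [this] at hjb; exact Bool.noConfusion hjb
  · have := hodd m
    rw [show 2 * m + 1 = j by omega] at this
    rw [this] at hja; exact Bool.noConfusion hja
end

section
/- For an infinite string ξ over a finite alphabet, the set Ω(ξ) is finite if and only if ξ is eventually periodic. -/
/-- The factor `ω(n) ω(n+1) ⋯ ω(n+len-1)` of a bi-infinite string. -/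
def blockZ {A : Type*} (ω : ℤ → A) (n : ℤ) (len : ℕ) : List A :=
  (List.range len).map fun j => ω (n + j)

/-- The factor `ξ(i) ξ(i+1) ⋯ ξ(i+len-1)` of a one-sided infinite string. -/
def blockN {A : Type*} (ξ : ℕ → A) (i len : ℕ) : List A :=
  (List.range len).map fun j => ξ (i + j)

/-- `Ω(ξ)`: the set of bi-infinite strings all of whose finite factors are
factors of `ξ`. -/
def Omega {A : Type*} (ξ : ℕ → A) : Set (ℤ → A) :=
  {ω | ∀ (n : ℤ) (len : ℕ), ∃ i : ℕ, blockZ ω n len = blockN ξ i len}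

/-- The two-sided shift on `A^ℤ`. -/
def shift {A : Type*} (ω : ℤ → A) : ℤ → A := fun n => ω (n + 1)

section Aux

variable {A : Type*}

lemma blockZ_eq (ω : ℤ → A) (n : ℤ) (len : ℕ) :
    blockZ ω n len = (List.range len).map (fun j : ℕ => ω (n + (j : ℤ))) := by
  unfold blockZ
  simp [List.bind_eq_flatMap, List.pure_def, List.map_flatMap,
    ← List.map_eq_flatMap]

lemma aux_blockZ_entry {x y : ℤ → A} {s : ℤ} {len : ℕ}
    (h : blockZ x s len = blockZ y s len) {j : ℕ} (hj : j < len) :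
    x (s + j) = y (s + j) := by
  rw [blockZ_eq, blockZ_eq] at h
  have h2 := congrArg (fun l => l[j]?) h
  simp only [List.getElem?_map, List.getElem?_range hj, Option.map_some] at h2
  exact Option.some.inj h2

lemma aux_blockZN_entry {ω : ℤ → A} {ξ : ℕ → A} {s : ℤ} {i len : ℕ}
    (h : blockZ ω s len = blockN ξ i len) {j : ℕ} (hj : j < len) :
    ω (s + j) = ξ (i + j) := by
  rw [blockZ_eq] at h
  unfold blockN at h
  have h2 := congrArg (fun l => l[j]?) h
  simp only [List.getElem?_map, List.getElem?_range hj, Option.map_some] at h2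
  exact Option.some.inj h2

lemma aux_blockN_congr {ξ : ℕ → A} {i i' len : ℕ}
    (h : ∀ j < len, ξ (i + j) = ξ (i' + j)) :
    blockN ξ i len = blockN ξ i' len := by
  unfold blockN
  exact List.map_congr_left fun j hj => h j (List.mem_range.mp hj)

lemma shift_injective : Function.Injective (shift (A := A)) := by
  intro x y h
  funext n
  have := congrFun h (n - 1)
  simpa [shift] using this

lemma shift_iterate_apply (ω : ℤ → A) (d : ℕ) (n : ℤ) :
    shift^[d] ω n = ω (n + d) := by
  induction d generalizing n with
  | zero => simp
  | succ d ih =>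
    rw [Function.iterate_succ_apply']
    show (shift^[d] ω) (n + 1) = ω (n + (d + 1 : ℕ))
    rw [ih]
    congr 1
    push_cast
    ring

lemma shift_mem_Omega {ξ : ℕ → A} {ω : ℤ → A} (h : ω ∈ Omega ξ) :
    shift ω ∈ Omega ξ := by
  intro n len
  obtain ⟨i, hi⟩ := h (n + 1) len
  refine ⟨i, ?_⟩
  rw [← hi]
  rw [blockZ_eq, blockZ_eq]
  apply List.map_congr_left
  intro j _
  show ω (n + j + 1) = ω (n + 1 + j)
  congr 1
  ring

lemma shift_iterate_mem_Omega {ξ : ℕ → A} {ω : ℤ → A} (h : ω ∈ Omega ξ) (k : ℕ) :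
    shift^[k] ω ∈ Omega ξ := by
  induction k with
  | zero => simpa using h
  | succ k ih => rw [Function.iterate_succ_apply']; exact shift_mem_Omega ih

/-- From finiteness of `Ω(ξ)`, a common period for all its elements. -/
lemma exists_common_period {ξ : ℕ → A} (h : (Omega ξ).Finite) :
    ∃ P : ℕ, 0 < P ∧ ∀ ω ∈ Omega ξ, ∀ n : ℤ, ω (n + P) = ω n := by
  have hsub : ∀ ω : ℤ → A, ∃ d : ℕ, 0 < d ∧ (ω ∈ Omega ξ → shift^[d] ω = ω) := by
    intro ω
    by_cases hω : ω ∈ Omega ξ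
    · haveI : Finite (Omega ξ) := h.to_subtype
      have hg : ∃ a b : ℕ, a ≠ b ∧ shift^[a] ω = shift^[b] ω := by
        obtain ⟨a, b, hab, he⟩ := Finite.exists_ne_map_eq_of_infinite
          (fun m : ℕ => (⟨shift^[m] ω, shift_iterate_mem_Omega hω m⟩ : Omega ξ))
        exact ⟨a, b, hab, congrArg Subtype.val he⟩
      have key : ∀ a b : ℕ, a < b → shift^[a] ω = shift^[b] ω →
          ∃ d : ℕ, 0 < d ∧ (ω ∈ Omega ξ → shift^[d] ω = ω) := by
        intro a b hab he
        refine ⟨b - a, by omega, fun _ => ?_⟩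
        have hb : b = a + (b - a) := by omega
        rw [hb, Function.iterate_add_apply] at he
        exact ((shift_injective.iterate a) he).symm
      obtain ⟨a, b, hab, he⟩ := hg
      rcases hab.lt_or_gt with hlt | hlt
      · exact key a b hlt he
      · exact key b a hlt he.symm
    · exact ⟨1, one_pos, fun h' => absurd h' hω⟩
  choose d hd0 hdfix using hsub
  refine ⟨∏ ω ∈ h.toFinset, d ω, Finset.prod_pos fun ω _ => hd0 ω, ?_⟩
  intro ω hω n
  have hdvd : d ω ∣ ∏ ω ∈ h.toFinset, d ω :=
    Finset.dvd_prod_of_mem d (h.mem_toFinset.mpr hω)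
  obtain ⟨m, hm⟩ := hdvd
  have hfix : shift^[∏ ω ∈ h.toFinset, d ω] ω = ω := by
    rw [hm, Function.iterate_mul]
    exact Function.iterate_fixed (hdfix ω hω) m
  calc ω (n + (∏ ω ∈ h.toFinset, d ω : ℕ))
      = shift^[∏ ω ∈ h.toFinset, d ω] ω n := (shift_iterate_apply _ _ _).symm
    _ = ω n := by rw [hfix]

/-- Build an element of `Ω(ξ)` from an ultrafilter extending the cofinite filter. -/
lemma exists_mem_omega_ultra [Fintype A] (ξ : ℕ → A) (U : Ultrafilter ℕ)
    (hU : (U : Filter ℕ) ≤ Filter.cofinite) :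
    ∃ ω ∈ Omega ξ, ∀ k : ℤ, {i : ℕ | ξ (((i : ℤ) + k).toNat) = ω k} ∈ U := by
  have hex : ∀ k : ℤ, ∃ a : A, {i : ℕ | ξ (((i : ℤ) + k).toNat) = a} ∈ U := by
    intro k
    by_contra hc
    push_neg at hc
    have h1 : ∀ a : A, {i : ℕ | ξ (((i : ℤ) + k).toNat) = a}ᶜ ∈ U :=
      fun a => Ultrafilter.compl_mem_iff_notMem.mpr (hc a)
    have h2 : (⋂ a : A, {i : ℕ | ξ (((i : ℤ) + k).toNat) = a}ᶜ) ∈ U :=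
      Filter.iInter_mem.mpr h1
    obtain ⟨i, hi⟩ := Filter.nonempty_of_mem h2
    simp only [Set.mem_iInter, Set.mem_compl_iff, Set.mem_setOf_eq] at hi
    exact hi _ rfl
  choose ω hω using hex
  refine ⟨ω, ?_, hω⟩
  intro n len
  have hcof : ∀ m : ℕ, {i : ℕ | m ≤ i} ∈ (U : Filter ℕ) := by
    intro m
    apply hU
    rw [Filter.mem_cofinite]
    apply (Set.finite_Iio m).subset
    intro x hx
    simp only [Set.mem_compl_iff, Set.mem_setOf_eq, not_le] at hx
    exact hx
  have hall : {i : ℕ | ∀ j ∈ Finset.range len,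
      ξ (((i : ℤ) + (n + j)).toNat) = ω (n + j)} ∈ U := by
    have := (Filter.eventually_all_finset (Finset.range len)
      (l := (U : Filter ℕ))
      (p := fun j i => ξ (((i : ℤ) + (n + j)).toNat) = ω (n + j))).mpr
      (fun j _ => hω (n + j))
    exact this
  have hmem := Filter.inter_mem hall (hcof n.natAbs)
  obtain ⟨i₀, hi₀, hi₀'⟩ := Filter.nonempty_of_mem hmem
  have hpos : 0 ≤ (i₀ : ℤ) + n := by
    simp only [Set.mem_setOf_eq] at hi₀'
    omega
  refine ⟨((i₀ : ℤ) + n).toNat, ?_⟩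
  rw [blockZ_eq]
  unfold blockN
  apply List.map_congr_left
  intro j hj
  have h1 : ξ (((i₀ : ℤ) + (n + j)).toNat) = ω (n + j) := hi₀ j hj
  rw [← h1]
  congr 1
  omega

end Aux

/-- For an infinite string `ξ` over a finite alphabet, the set `Ω(ξ)` is
finite if and only if `ξ` is eventually periodic, i.e. `ξ = w · u · u · u ⋯`
for some finite words `w, u` with `u` nonempty. -/
theorem Omega_finite_iff_eventually_periodic {A : Type*} [Fintype A]
    (ξ : ℕ → A) :
    (Omega ξ).Finite ↔
      ∃ w u : List A, u ≠ [] ∧ ∀ n : ℕ,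
        ξ n = if n < w.length then w.getD n (ξ 0)
          else u.getD ((n - w.length) % u.length) (ξ 0) := by
  constructor
  · -- finite → eventually periodic
    intro hfin
    obtain ⟨P, hP, hper⟩ := exists_common_period hfin
    -- the set of "bad" indices is finite
    have hBfin : {i : ℕ | ξ (i + P) ≠ ξ i}.Finite := by
      by_contra hBinf
      have hBinf : {i : ℕ | ξ (i + P) ≠ ξ i}.Infinite := hBinf
      haveI hne : (Filter.cofinite ⊓
          Filter.principal {i : ℕ | ξ (i + P) ≠ ξ i}).NeBot :=
        Filter.frequently_iff_neBot.mp
          (Set.infinite_iff_frequently_cofinite.mp hBinf)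
      obtain ⟨U, hUle⟩ := Ultrafilter.exists_le
        (Filter.cofinite ⊓ Filter.principal {i : ℕ | ξ (i + P) ≠ ξ i})
      have hUcof : (U : Filter ℕ) ≤ Filter.cofinite := hUle.trans inf_le_left
      have hBU : {i : ℕ | ξ (i + P) ≠ ξ i} ∈ U :=
        hUle (Filter.mem_inf_of_right (Filter.mem_principal_self _))
      obtain ⟨ω, hωΩ, hωU⟩ := exists_mem_omega_ultra ξ U hUcof
      have h0 := hωU 0
      have hp := hωU (P : ℤ)
      have hωP : ω (P : ℤ) = ω 0 := by
        have := hper ω hωΩ 0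
        simpa using this
      have hint := Filter.inter_mem (Filter.inter_mem h0 hp) hBU
      obtain ⟨i, ⟨h1, h2⟩, h3⟩ := Filter.nonempty_of_mem hint
      simp only [Set.mem_setOf_eq] at h1 h2 h3
      apply h3
      have e1 : ((i : ℤ) + 0).toNat = i := by omega
      have e2 : ((i : ℤ) + (P : ℤ)).toNat = i + P := by omega
      rw [e1] at h1
      rw [e2] at h2
      rw [h1, h2, hωP]
    -- extract a threshold
    obtain ⟨N, hN⟩ := hBfin.bddAbove
    have hper' : ∀ i : ℕ, N + 1 ≤ i → ξ (i + P) = ξ i := by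
      intro i hi
      by_contra hc
      have := hN (Set.mem_setOf_eq ▸ hc : i ∈ {i : ℕ | ξ (i + P) ≠ ξ i})
      omega
    set N' : ℕ := N + 1 with hN'
    refine ⟨(List.range N').map ξ, (List.range P).map (fun j => ξ (N' + j)), ?_, ?_⟩
    · simp only [ne_eq, List.map_eq_nil_iff, List.range_eq_nil]
      omega
    · intro n
      have hwl : ((List.range N').map ξ).length = N' := by simp
      have hul : ((List.range P).map (fun j => ξ (N' + j))).length = P := by simp
      rw [hwl, hul]
      have haux : ∀ m : ℕ, ξ (N' + m) = ξ (N' + m % P) := by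
        intro m
        induction m using Nat.strong_induction_on with
        | _ m ih =>
          by_cases hm : m < P
          · rw [Nat.mod_eq_of_lt hm]
          · have h1 : ξ (N' + (m - P) + P) = ξ (N' + (m - P)) :=
              hper' _ (by omega)
            have h2 : N' + (m - P) + P = N' + m := by omega
            have h3 : m % P = (m - P) % P := Nat.mod_eq_sub_mod (by omega)
            rw [← h2, h1, ih (m - P) (by omega), ← h3]
      split
      · next h =>
        rw [List.getD_eq_getElem?_getD, List.getElem?_map, List.getElem?_range h]
        simp
      · next h =>
        push_neg at h
        have hmod : (n - N') % P < P := Nat.mod_lt _ hP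
        rw [List.getD_eq_getElem?_getD, List.getElem?_map, List.getElem?_range hmod]
        simp only [Option.map_some, Option.getD_some]
        calc ξ n = ξ (N' + (n - N')) := by congr 1; omega
          _ = ξ (N' + (n - N') % P) := haux _
  · -- eventually periodic → finite
    rintro ⟨w, u, hu, hform⟩
    classical
    set W := w.length with hW
    set P := u.length with hPdef
    have hP : 0 < P := List.length_pos_iff.mpr hu
    have hkey : ∀ m m' : ℕ, W ≤ m → W ≤ m' →
        (m - W) % P = (m' - W) % P → ξ m = ξ m' := by
      intro m m' h1 h2 h3
      rw [hform m, hform m', if_neg (by omega), if_neg (by omega), h3]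
    have hred : ∀ i len : ℕ, ∃ i' : ℕ, i' < W + P ∧
        blockN ξ i len = blockN ξ i' len := by
      intro i len
      by_cases hi : i < W
      · exact ⟨i, by omega, rfl⟩
      · refine ⟨W + (i - W) % P, by have := Nat.mod_lt (i - W) hP; omega, ?_⟩
        apply aux_blockN_congr
        intro j hj
        apply hkey (i + j) (W + (i - W) % P + j) (by omega) (by omega)
        have e1 : (i + j) - W = (i - W) + j := by omega
        have e2 : (W + (i - W) % P + j) - W = (i - W) % P + j := by omega
        rw [e1, e2, Nat.mod_add_mod]
    by_contra hinf
    have hinf : (Omega ξ).Infinite := hinf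
    obtain ⟨t, hts, htc⟩ := hinf.exists_subset_card_eq (W + P + 1)
    have hwit : ∀ x y : ℤ → A, ∃ n : ℤ, x ≠ y → x n ≠ y n := by
      intro x y
      by_cases h : x = y
      · exact ⟨0, fun hc => absurd h hc⟩
      · by_contra hc
        push_neg at hc
        exact h (funext fun n => (hc n).2)
    choose f hf using hwit
    set L : ℕ := t.sup (fun x => t.sup fun y => (f x y).natAbs) with hLdef
    have hL : ∀ x ∈ t, ∀ y ∈ t, (f x y).natAbs ≤ L := by
      intro x hx y hy
      exact le_trans (Finset.le_sup (f := fun y => (f x y).natAbs) hy)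
        (Finset.le_sup (f := fun x => t.sup fun y => (f x y).natAbs) hx)
    have hinj : Set.InjOn (fun x : ℤ → A => blockZ x (-(L : ℤ)) (2 * L + 1)) ↑t := by
      intro x hx y hy hxy
      by_contra hne
      have hn := hf x y hne
      have habs := hL x hx y hy
      apply hn
      have hj : ((f x y) + L).toNat < 2 * L + 1 := by omega
      have h2 := aux_blockZ_entry (x := x) (y := y) hxy hj
      have e : -(L : ℤ) + ((((f x y) + L).toNat : ℕ) : ℤ) = f x y := by omega
      rwa [e] at h2
    have himg : ∀ x ∈ t, blockZ x (-(L : ℤ)) (2 * L + 1) ∈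
        (Finset.range (W + P)).image (fun i => blockN ξ i (2 * L + 1)) := by
      intro x hx
      obtain ⟨i, hi⟩ := hts (Finset.mem_coe.mpr hx) (-(L : ℤ)) (2 * L + 1)
      obtain ⟨i', hi'lt, hi'⟩ := hred i (2 * L + 1)
      exact Finset.mem_image.mpr ⟨i', Finset.mem_range.mpr hi'lt, (hi.trans hi').symm⟩
    have hcard := Finset.card_le_card_of_injOn _ himg hinj
    have hcard2 : ((Finset.range (W + P)).image
        (fun i => blockN ξ i (2 * L + 1))).card ≤ W + P := by
      calc _ ≤ (Finset.range (W + P)).card := Finset.card_image_le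
        _ = W + P := Finset.card_range _
    omega
end

section
/- Let T₁ : X₁ → X₁ and T₂ : X₂ → X₂ be aperiodic homeomorphisms of Cantor sets, and suppose T₂ is a continuous factor of T₁, i.e., there is a continuous surjection f : X₁ → X₂ with f∘T₁ = T₂∘f. Then the topological full group [[T₂]] embeds into [[T₁]] via the map sending the element S₂ of [[T₂]] given by S₂(y) = T₂^{ν(y)}(y) (ν : X₂ → ℤ continuous) to the homeomorphism x ↦ T₁^{ν(f(x))}(x); this map is a well-defined injective group homomorphism. -/
/-!
An element `F = T₂^ν` of `[[T₂]]` lifts to `x ↦ T₁^{ν (f x)} x`. Since `f` intertwines all powers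
of `T₁` and `T₂`, the lift covers `F`, i.e. `f ∘ lift F = F ∘ f`; hence the cocycle of `G ∘ F`,
namely `ν_G ∘ F + ν_F`, lifts to the cocycle of `lift G ∘ lift F`, and the lift is multiplicative.
Aperiodicity of `T₂` makes `ν` unique, so the lift does not depend on the choice of `ν`;
aperiodicity of `T₁` recovers `ν ∘ f` from the lift, and surjectivity of `f` then recovers `ν`.
-/

/-- The topological full group `[[T]]` of a homeomorphism `T` of a Cantor set:
the set of homeomorphisms `F` of the form `F(x) = T^{ν(x)}(x)` for some
continuous `ν : X → ℤ`. -/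
def TFG {X : Type*} [TopologicalSpace X] (T : X ≃ₜ X) : Set (X ≃ₜ X) :=
  {F | ∃ ν : X → ℤ, Continuous ν ∧ ∀ x, F x = (T.toEquiv ^ ν x) x}

open Function

namespace Equiv.Perm

variable {α β : Type*}

def IsAperiodic (σ : Perm α) : Prop :=
  ∀ (x : α) (n : ℕ), 1 ≤ n → (σ ^ (n : ℤ)) x ≠ x

theorem zpow_apply_zpow_apply (σ : Perm α) (m n : ℤ) (x : α) :
    (σ ^ m) ((σ ^ n) x) = (σ ^ (m + n)) x := by
  rw [zpow_add, mul_apply]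

theorem semiconj_zpow {f : α → β} {σ : Perm α} {τ : Perm β} (h : Semiconj f σ τ) :
    ∀ n : ℤ, Semiconj f ⇑(σ ^ n) ⇑(τ ^ n)
  | .ofNat n => by
    simpa only [Int.ofNat_eq_natCast, zpow_natCast, coe_pow] using h.iterate_right n
  | .negSucc n => by
    simp only [zpow_negSucc]
    exact (h.iterate_right (n + 1)).inverses_right (σ ^ (n + 1)).right_inv
      (τ ^ (n + 1)).left_inv

theorem IsAperiodic.zpow_apply_injective {σ : Perm α} (hσ : σ.IsAperiodic) (x : α) :
    Injective fun n : ℤ => (σ ^ n) x := by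
  have fixed : ∀ k : ℤ, (σ ^ k) x = x → k = 0 := by
    intro k hk
    have hk' : (σ ^ (k.natAbs : ℤ)) x = x := by
      rcases Int.natAbs_eq k with h | h
      · rwa [← h]
      · rw [← neg_eq_iff_eq_neg.mpr h, zpow_neg, inv_eq_iff_eq, hk]
    by_contra hne
    exact hσ x k.natAbs (Int.natAbs_pos.mpr hne) hk'
  intro m n hmn
  have : (σ ^ (-n + m)) x = x := by
    rw [← zpow_apply_zpow_apply, show (σ ^ m) x = (σ ^ n) x from hmn, zpow_apply_zpow_apply,
      neg_add_cancel, zpow_zero, one_apply]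
  linarith [fixed _ this]

end Equiv.Perm

namespace Homeomorph

variable {X : Type*} [TopologicalSpace X]

def toPermHom : (X ≃ₜ X) →* Equiv.Perm X where
  toFun T := T.toEquiv
  map_one' := rfl
  map_mul' _ _ := rfl

theorem continuous_toEquiv_zpow (T : X ≃ₜ X) (n : ℤ) : Continuous ⇑(T.toEquiv ^ n) := by
  rw [← show toPermHom (T ^ n) = T.toEquiv ^ n from map_zpow toPermHom T n]
  exact (T ^ n).continuous

theorem continuous_zpow_apply_of_continuous (T : X ≃ₜ X) {μ : X → ℤ} (hμ : Continuous μ) :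
    Continuous fun x => (T.toEquiv ^ μ x) x := by
  refine continuous_iff_continuousAt.mpr fun x => ?_
  refine (T.continuous_toEquiv_zpow (μ x)).continuousAt.congr ?_
  filter_upwards [(isOpen_discrete {μ x}).preimage hμ |>.mem_nhds rfl] with y (hy : μ y = μ x)
  rw [hy]

end Homeomorph

section Factor

open Equiv.Perm

variable {X Y : Type*} [TopologicalSpace X] [TopologicalSpace Y]
  {T₁ : X ≃ₜ X} {T₂ : Y ≃ₜ Y} {f : X → Y} (hf : Continuous f) (hff : Semiconj f T₁ T₂)

/-- The inverse is the lift of `F⁻¹`, whose cocycle is `-ν ∘ F⁻¹`. -/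
def liftAlongFactor (F : Y ≃ₜ Y) {ν : Y → ℤ} (hν : Continuous ν)
    (hF : ∀ y, F y = (T₂.toEquiv ^ ν y) y) : X ≃ₜ X where
  toFun x := (T₁.toEquiv ^ ν (f x)) x
  invFun x := (T₁.toEquiv ^ (-ν (F.symm (f x)))) x
  left_inv x := by
    dsimp only
    rw [(semiconj_zpow hff _).eq, ← hF, F.symm_apply_apply, zpow_apply_zpow_apply,
      neg_add_cancel, zpow_zero, one_apply]
  right_inv x := by
    obtain ⟨w, hw⟩ : ∃ w, F.symm (f x) = w := ⟨_, rfl⟩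
    have hx : f x = (T₂.toEquiv ^ ν w) w := by rw [← hF, ← hw, F.apply_symm_apply]
    dsimp only
    rw [hw, (semiconj_zpow hff _).eq, hx]
    simp only [zpow_apply_zpow_apply, neg_add_cancel, add_neg_cancel, zpow_zero, one_apply]
  continuous_toFun := T₁.continuous_zpow_apply_of_continuous (hν.comp hf)
  continuous_invFun :=
    T₁.continuous_zpow_apply_of_continuous (hν.comp (F.continuous_symm.comp hf)).neg

open Classical in
noncomputable def tfgLift (F : Y ≃ₜ Y) : X ≃ₜ X :=
  if h : F ∈ TFG T₂ then liftAlongFactor hf hff F h.choose_spec.1 h.choose_spec.2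
  else Homeomorph.refl X

theorem exists_cocycle_tfgLift {F : Y ≃ₜ Y} (hF : F ∈ TFG T₂) :
    ∃ ν : Y → ℤ, Continuous ν ∧ (∀ y, F y = (T₂.toEquiv ^ ν y) y) ∧
      ∀ x, tfgLift hf hff F x = (T₁.toEquiv ^ ν (f x)) x :=
  ⟨hF.choose, hF.choose_spec.1, hF.choose_spec.2, fun x => by rw [tfgLift, dif_pos hF]; rfl⟩

theorem tfgLift_apply (hT₂ : IsAperiodic T₂.toEquiv) {F : Y ≃ₜ Y} {ν : Y → ℤ}
    (hν : Continuous ν) (hF : ∀ y, F y = (T₂.toEquiv ^ ν y) y) (x : X) :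
    tfgLift hf hff F x = (T₁.toEquiv ^ ν (f x)) x := by
  obtain ⟨μ, -, hFμ, hE⟩ := exists_cocycle_tfgLift hf hff ⟨ν, hν, hF⟩
  rw [hE, hT₂.zpow_apply_injective (f x) ((hFμ (f x)).symm.trans (hF (f x)))]

theorem tfgLift_mem {F : Y ≃ₜ Y} (hF : F ∈ TFG T₂) : tfgLift hf hff F ∈ TFG T₁ :=
  let ⟨ν, hν, _, hE⟩ := exists_cocycle_tfgLift hf hff hF
  ⟨ν ∘ f, hν.comp hf, hE⟩

theorem tfgLift_trans (hT₂ : IsAperiodic T₂.toEquiv) {F G : Y ≃ₜ Y} (hF : F ∈ TFG T₂)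
    (hG : G ∈ TFG T₂) :
    tfgLift hf hff (F.trans G) = (tfgLift hf hff F).trans (tfgLift hf hff G) := by
  obtain ⟨ν, hν, hFν⟩ := hF
  obtain ⟨μ, hμ, hGμ⟩ := hG
  have hFG : ∀ y, F.trans G y = (T₂.toEquiv ^ (μ (F y) + ν y)) y := fun y => by
    rw [Homeomorph.trans_apply, ← zpow_apply_zpow_apply, ← hFν, hGμ]
  have hcont : Continuous fun y => μ (F y) + ν y := (hμ.comp F.continuous).add hν
  ext x
  rw [Homeomorph.trans_apply, tfgLift_apply hf hff hT₂ hcont hFG,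
    tfgLift_apply hf hff hT₂ hν hFν, tfgLift_apply hf hff hT₂ hμ hGμ,
    (semiconj_zpow hff _).eq, ← hFν, zpow_apply_zpow_apply]

theorem tfgLift_injOn (hT₁ : IsAperiodic T₁.toEquiv) (hfs : Surjective f) :
    Set.InjOn (tfgLift hf hff) (TFG T₂) := by
  intro F hF G hG hFG
  obtain ⟨ν, -, hFν, hEF⟩ := exists_cocycle_tfgLift hf hff hF
  obtain ⟨μ, -, hGμ, hEG⟩ := exists_cocycle_tfgLift hf hff hG
  ext y
  obtain ⟨x, rfl⟩ := hfs y
  have hνμ : ν (f x) = μ (f x) :=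
    hT₁.zpow_apply_injective x ((hEF x).symm.trans ((congrArg (· x) hFG).trans (hEG x)))
  rw [hFν, hGμ, hνμ]

end Factor

theorem tfg_embedding_of_factor_general
    {X₁ X₂ : Type*} [TopologicalSpace X₁] [TopologicalSpace X₂]
    (T₁ : X₁ ≃ₜ X₁) (T₂ : X₂ ≃ₜ X₂)
    (hap₁ : ∀ (x : X₁) (n : ℕ), 1 ≤ n → (T₁.toEquiv ^ (n : ℤ)) x ≠ x)
    (hap₂ : ∀ (x : X₂) (n : ℕ), 1 ≤ n → (T₂.toEquiv ^ (n : ℤ)) x ≠ x)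
    (f : X₁ → X₂) (hf : Continuous f) (hfs : Function.Surjective f)
    (hff : ∀ x, f (T₁ x) = T₂ (f x)) :
    ∃ E : (X₂ ≃ₜ X₂) → (X₁ ≃ₜ X₁),
      (∀ F ∈ TFG T₂, E F ∈ TFG T₁) ∧
      (∀ F ∈ TFG T₂, ∀ G ∈ TFG T₂, E (F.trans G) = (E F).trans (E G)) ∧
      (∀ F ∈ TFG T₂, ∀ G ∈ TFG T₂, E F = E G → F = G) ∧
      (∀ F ∈ TFG T₂, ∀ ν : X₂ → ℤ, Continuous ν →
        (∀ y, F y = (T₂.toEquiv ^ ν y) y) →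
        ∀ x, E F x = (T₁.toEquiv ^ ν (f x)) x) :=
  ⟨tfgLift hf hff, fun _ => tfgLift_mem hf hff, fun _ hF _ hG => tfgLift_trans hf hff hap₂ hF hG,
    tfgLift_injOn hf hff hap₁ hfs, fun _ _ _ hν hF => tfgLift_apply hf hff hap₂ hν hF⟩

/-- If `T₁`, `T₂` are aperiodic homeomorphisms of Cantor sets and `T₂` is a
continuous factor of `T₁` via a continuous surjection `f` with
`f ∘ T₁ = T₂ ∘ f`, then `[[T₂]]` embeds into `[[T₁]]` via the map sending the
element `S₂` of `[[T₂]]` given by `S₂(y) = T₂^{ν(y)}(y)` to the homeomorphism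
`x ↦ T₁^{ν(f(x))}(x)`; this map is a well-defined injective group
homomorphism (here composition `F ∘ G` is written `G.trans F`). -/
theorem tfg_embedding_of_factor
    {X₁ X₂ : Type*} [TopologicalSpace X₁] [TopologicalSpace X₂]
    [CompactSpace X₁] [CompactSpace X₂]
    [TopologicalSpace.MetrizableSpace X₁] [TopologicalSpace.MetrizableSpace X₂]
    [TotallyDisconnectedSpace X₁] [TotallyDisconnectedSpace X₂]
    [Nonempty X₁] [Nonempty X₂]
    (hperf₁ : ∀ x : X₁, ¬ IsOpen ({x} : Set X₁))
    (hperf₂ : ∀ x : X₂, ¬ IsOpen ({x} : Set X₂))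
    (T₁ : X₁ ≃ₜ X₁) (T₂ : X₂ ≃ₜ X₂)
    (hap₁ : ∀ (x : X₁) (n : ℕ), 1 ≤ n → (T₁.toEquiv ^ (n : ℤ)) x ≠ x)
    (hap₂ : ∀ (x : X₂) (n : ℕ), 1 ≤ n → (T₂.toEquiv ^ (n : ℤ)) x ≠ x)
    (f : X₁ → X₂) (hf : Continuous f) (hfs : Function.Surjective f)
    (hff : ∀ x, f (T₁ x) = T₂ (f x)) :
    ∃ E : (X₂ ≃ₜ X₂) → (X₁ ≃ₜ X₁),
      (∀ F ∈ TFG T₂, E F ∈ TFG T₁) ∧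
      (∀ F ∈ TFG T₂, ∀ G ∈ TFG T₂, E (F.trans G) = (E F).trans (E G)) ∧
      (∀ F ∈ TFG T₂, ∀ G ∈ TFG T₂, E F = E G → F = G) ∧
      (∀ F ∈ TFG T₂, ∀ ν : X₂ → ℤ, Continuous ν →
        (∀ y, F y = (T₂.toEquiv ^ ν y) y) →
        ∀ x, E F x = (T₁.toEquiv ^ ν (f x)) x) :=
  tfg_embedding_of_factor_general T₁ T₂ hap₁ hap₂ f hf hfs hff
end

section
/- If T is an aperiodic homeomorphism of a Cantor set X, then the map ℓ ↦ h_{T,ℓ} (where h_{T,ℓ}(x) = T^{ℓ(x)}(x)) restricts to a group isomorphism from the group of invertible elements of the monoid (C(X,ℤ), ⊕_T) onto the topological full group [[T]]. -/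
/-!
Since `T^{a + b} = T^a ∘ T^b`, the map `ℓ ↦ h_{T,ℓ}` sends `⊕_T` to composition and `0` to the
identity, so `⊕_T`-invertible cocycles go to bijections, which are homeomorphisms because `ℤ` is
discrete. Conversely, if `F = h_{T,ν}` is a homeomorphism, then `-ν ∘ F⁻¹` is a `⊕_T`-inverse of `ν`.
Injectivity is aperiodicity: `T^{ℓ₁ x} x = T^{ℓ₂ x} x` forces `ℓ₁ x = ℓ₂ x`.
-/

/-- `h_{T,ℓ} (x) = T^{ℓ(x)}(x)`. -/
def hTl {X : Type*} (T : Equiv.Perm X) (ℓ : X → ℤ) : X → X :=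
  fun x => (T ^ ℓ x) x

/-- `(ℓ₁ ⊕_T ℓ₂)(x) = ℓ₁(T^{ℓ₂(x)}(x)) + ℓ₂(x)`. -/
def oplus {X : Type*} (T : Equiv.Perm X) (ℓ₁ ℓ₂ : X → ℤ) : X → ℤ :=
  fun x => ℓ₁ (hTl T ℓ₂ x) + ℓ₂ x

/-- `ℓ` is an invertible element of the monoid `(C(X,ℤ), ⊕_T)`. -/
def IsOplusInvertible {X : Type*} [TopologicalSpace X] (T : Equiv.Perm X)
    (ℓ : X → ℤ) : Prop :=
  Continuous ℓ ∧ ∃ ℓ' : X → ℤ, Continuous ℓ' ∧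
    oplus T ℓ ℓ' = (fun _ => 0) ∧ oplus T ℓ' ℓ = (fun _ => 0)

namespace Equiv.Perm

variable {X : Type*} (T : Equiv.Perm X)

theorem hTl_zero : hTl T (fun _ => 0) = id := by
  funext x
  simp [hTl]

theorem hTl_oplus (ℓ₁ ℓ₂ : X → ℤ) : hTl T (oplus T ℓ₁ ℓ₂) = hTl T ℓ₁ ∘ hTl T ℓ₂ := by
  funext x
  simp only [hTl, oplus, Function.comp_apply, zpow_add, Equiv.Perm.mul_apply]

variable {T}

theorem leftInverse_hTl_of_oplus_eq_zero {ℓ ℓ' : X → ℤ} (h : oplus T ℓ ℓ' = fun _ => 0) :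
    Function.LeftInverse (hTl T ℓ) (hTl T ℓ') :=
  congrFun (show hTl T ℓ ∘ hTl T ℓ' = id by rw [← hTl_oplus, h, hTl_zero])

theorem hTl_neg_comp {ν : X → ℤ} {g : X → X} (hg : Function.RightInverse g (hTl T ν)) :
    hTl T (fun x => -ν (g x)) = g := by
  funext x
  simp only [hTl, zpow_neg, inv_eq_iff_eq]
  exact (hg x).symm

theorem oplus_neg_comp_eq_zero {ν : X → ℤ} {g : X → X}
    (hg : Function.RightInverse g (hTl T ν)) : oplus T ν (fun x => -ν (g x)) = fun _ => 0 := by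
  funext x
  simp only [oplus, hTl_neg_comp hg, add_neg_cancel]

theorem neg_comp_oplus_eq_zero {ν : X → ℤ} {g : X → X}
    (hg : Function.LeftInverse g (hTl T ν)) : oplus T (fun x => -ν (g x)) ν = fun _ => 0 := by
  funext x
  simp only [oplus, hg x, neg_add_cancel]

theorem eq_zero_of_zpow_apply_eq_self
    (hap : ∀ (x : X) (n : ℕ), 1 ≤ n → (T ^ (n : ℤ)) x ≠ x) {x : X} {k : ℤ}
    (hk : (T ^ k) x = x) : k = 0 := by
  by_contra hne
  refine hap x k.natAbs (Int.natAbs_pos.mpr hne) ?_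
  rcases Int.natAbs_eq k with h | h
  · rwa [← h]
  · rw [show (k.natAbs : ℤ) = -k by omega, zpow_neg, inv_eq_iff_eq, hk]

theorem hTl_injective (hap : ∀ (x : X) (n : ℕ), 1 ≤ n → (T ^ (n : ℤ)) x ≠ x) :
    Function.Injective (hTl T) := by
  intro ℓ₁ ℓ₂ h
  funext x
  have hx : (T ^ (-ℓ₂ x + ℓ₁ x)) x = x := by
    rw [zpow_add, Equiv.Perm.mul_apply, zpow_neg, inv_eq_iff_eq]
    exact congrFun h x
  exact (neg_add_eq_zero.mp (eq_zero_of_zpow_apply_eq_self hap hx)).symm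

end Equiv.Perm

namespace Homeomorph

variable {X : Type*} [TopologicalSpace X]

theorem toEquiv_zpow (T : X ≃ₜ X) (n : ℤ) : (T ^ n).toEquiv = T.toEquiv ^ n :=
  map_zpow (⟨⟨Homeomorph.toEquiv, rfl⟩, fun _ _ => rfl⟩ : (X ≃ₜ X) →* Equiv.Perm X) T n

theorem continuous_hTl (T : X ≃ₜ X) {ℓ : X → ℤ} (hℓ : Continuous ℓ) :
    Continuous (hTl T.toEquiv ℓ) := by
  have hact : Continuous fun p : ℤ × X => (T.toEquiv ^ p.1) p.2 :=
    continuous_prod_of_discrete_left.mpr fun n => by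
      simpa only [← toEquiv_zpow, coe_toEquiv] using (T ^ n).continuous
  exact hact.comp (hℓ.prodMk continuous_id)

theorem exists_eq_hTl_of_isOplusInvertible (T : X ≃ₜ X) {ℓ : X → ℤ}
    (hℓ : IsOplusInvertible T.toEquiv ℓ) : ∃ F : X ≃ₜ X, ⇑F = hTl T.toEquiv ℓ := by
  obtain ⟨hℓc, ℓ', hℓ'c, hℓℓ', hℓ'ℓ⟩ := hℓ
  exact ⟨⟨⟨hTl T.toEquiv ℓ, hTl T.toEquiv ℓ',
      Equiv.Perm.leftInverse_hTl_of_oplus_eq_zero hℓ'ℓ,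
      Equiv.Perm.leftInverse_hTl_of_oplus_eq_zero hℓℓ'⟩,
    continuous_hTl T hℓc, continuous_hTl T hℓ'c⟩, rfl⟩

theorem isOplusInvertible_of_coe_eq_hTl {T : Equiv.Perm X} {F : X ≃ₜ X} {ν : X → ℤ} (hν : Continuous ν)
    (hF : ⇑F = hTl T ν) : IsOplusInvertible T ν := by
  have hright : Function.RightInverse F.symm (hTl T ν) := hF ▸ F.apply_symm_apply
  have hleft : Function.LeftInverse F.symm (hTl T ν) := hF ▸ F.symm_apply_apply
  exact ⟨hν, fun x => -ν (F.symm x), (hν.comp F.symm.continuous).neg,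
    Equiv.Perm.oplus_neg_comp_eq_zero hright, Equiv.Perm.neg_comp_oplus_eq_zero hleft⟩

end Homeomorph

theorem tfg_model_isomorphism_general {X : Type*} [TopologicalSpace X]
    (T : X ≃ₜ X)
    (hap : ∀ (x : X) (n : ℕ), 1 ≤ n → (T.toEquiv ^ (n : ℤ)) x ≠ x) :
    (∀ ℓ : X → ℤ, IsOplusInvertible T.toEquiv ℓ →
      ∃ F : X ≃ₜ X, F ∈ TFG T ∧ ∀ x, F x = hTl T.toEquiv ℓ x) ∧
    (∀ ℓ₁ ℓ₂ : X → ℤ, IsOplusInvertible T.toEquiv ℓ₁ →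
      IsOplusInvertible T.toEquiv ℓ₂ →
      hTl T.toEquiv ℓ₁ = hTl T.toEquiv ℓ₂ → ℓ₁ = ℓ₂) ∧
    (∀ ℓ₁ ℓ₂ : X → ℤ, IsOplusInvertible T.toEquiv ℓ₁ →
      IsOplusInvertible T.toEquiv ℓ₂ →
      hTl T.toEquiv (oplus T.toEquiv ℓ₁ ℓ₂) =
        hTl T.toEquiv ℓ₁ ∘ hTl T.toEquiv ℓ₂) ∧
    (∀ F ∈ TFG T, ∃ ℓ : X → ℤ, IsOplusInvertible T.toEquiv ℓ ∧
      ∀ x, F x = hTl T.toEquiv ℓ x) := by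
  refine ⟨fun ℓ hℓ => ?_, fun ℓ₁ ℓ₂ _ _ h => Equiv.Perm.hTl_injective hap h,
    fun ℓ₁ ℓ₂ _ _ => Equiv.Perm.hTl_oplus T.toEquiv ℓ₁ ℓ₂, ?_⟩
  · obtain ⟨F, hF⟩ := Homeomorph.exists_eq_hTl_of_isOplusInvertible T hℓ
    exact ⟨F, ⟨ℓ, hℓ.1, congrFun hF⟩, congrFun hF⟩
  · rintro F ⟨ν, hν, hFν⟩
    exact ⟨ν, Homeomorph.isOplusInvertible_of_coe_eq_hTl hν (funext hFν), hFν⟩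

/-- For an aperiodic homeomorphism `T` of a Cantor set `X`, the map
`ℓ ↦ h_{T,ℓ}` restricts to a group isomorphism from the group of invertible
elements of the monoid `(C(X,ℤ), ⊕_T)` onto the topological full group
`[[T]]`: it maps invertible elements to elements of `[[T]]`, is injective,
multiplicative, and surjective onto `[[T]]`. -/
theorem tfg_model_isomorphism {X : Type*} [TopologicalSpace X] [CompactSpace X]
    [TopologicalSpace.MetrizableSpace X] [TotallyDisconnectedSpace X]
    [Nonempty X] (hperf : ∀ x : X, ¬ IsOpen ({x} : Set X))
    (T : X ≃ₜ X)
    (hap : ∀ (x : X) (n : ℕ), 1 ≤ n → (T.toEquiv ^ (n : ℤ)) x ≠ x) :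
    (∀ ℓ : X → ℤ, IsOplusInvertible T.toEquiv ℓ →
      ∃ F : X ≃ₜ X, F ∈ TFG T ∧ ∀ x, F x = hTl T.toEquiv ℓ x) ∧
    (∀ ℓ₁ ℓ₂ : X → ℤ, IsOplusInvertible T.toEquiv ℓ₁ →
      IsOplusInvertible T.toEquiv ℓ₂ →
      hTl T.toEquiv ℓ₁ = hTl T.toEquiv ℓ₂ → ℓ₁ = ℓ₂) ∧
    (∀ ℓ₁ ℓ₂ : X → ℤ, IsOplusInvertible T.toEquiv ℓ₁ →
      IsOplusInvertible T.toEquiv ℓ₂ →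
      hTl T.toEquiv (oplus T.toEquiv ℓ₁ ℓ₂) =
        hTl T.toEquiv ℓ₁ ∘ hTl T.toEquiv ℓ₂) ∧
    (∀ F ∈ TFG T, ∃ ℓ : X → ℤ, IsOplusInvertible T.toEquiv ℓ ∧
      ∀ x, F x = hTl T.toEquiv ℓ x) :=
  tfg_model_isomorphism_general T hap
end
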